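/- arXiv:1210.6780 — 2 statements merged into one kernel-verified Lean document; each statement's English description precedes it below -/
import Mathlib

section
/- Let M be the nk×nk block matrix with n×n blocks of size k×k, where the diagonal blocks equal U+L, the blocks strictly above the diagonal equal U, and the blocks strictly below the diagonal equal U+I (with U, L, I the k×k strictly upper all-ones, strictly lower all-ones, and identity matrices respectively). If u and v are valid bid vectors—i.e., each of their n blocks of length k is a canonical basis vector of ℚ^k—and M·u = M·v, then u = v. (Injectivity of the auction outcome map on valid bid vectors.) -/
def Umat (k : ℕ) : Matrix (Fin k) (Fin k) ℚ := fun i j => if i < j then 1 else 0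
def Lmat (k : ℕ) : Matrix (Fin k) (Fin k) ℚ := fun i j => if j < i then 1 else 0

/-- The auction outcome block matrix: block (r,s) is U+L if r=s, U if r<s, U+I if r>s. -/
def Mmat (n k : ℕ) : Matrix (Fin n × Fin k) (Fin n × Fin k) ℚ := fun p q =>
  if p.1 = q.1 then (Umat k + Lmat k) p.2 q.2
  else if p.1 < q.1 then Umat k p.2 q.2
  else (Umat k + 1) p.2 q.2

/-- A valid bid vector: each of the n blocks of length k is a canonical basis vector. -/
def ValidBid (n k : ℕ) (b : Fin n × Fin k → ℚ) : Prop :=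
  ∀ r : Fin n, ∃ i : Fin k, ∀ t : Fin k, b (r, t) = (Pi.single i 1 : Fin k → ℚ) t

/-!
If a valid bid vector puts its `s`-th unit at price `i s`, the `t`-sum of the `r`-th block of
`M b` is `(k - 1) + r + ∑ s, i s - i r`: the diagonal block `U + L` has column sums `k - 1`, an
off-diagonal column `i s` of `U` sums to `i s`, and the identity in the blocks below the diagonal
adds one for every `s < r`. Equal outcomes therefore give `∑ i - i r = ∑ j - j r` for every `r`;
summing over `r` yields `∑ i = ∑ j` as soon as `n ≥ 2`, hence `i = j`. For `n = 1` the outcome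
is `1 - e (i 0)`, which determines `i 0` directly.
-/

open Matrix Finset

theorem Fintype.eq_of_forall_sum_sub_apply_eq {ι K : Type*} [Fintype ι] [Field K] [CharZero K]
    (hι : 2 ≤ Fintype.card ι) {a b : ι → K} (h : ∀ r, ∑ s, a s - a r = ∑ s, b s - b r) :
    a = b := by
  have hsum : ∑ s, a s = ∑ s, b s := by
    have htot := Finset.sum_congr rfl fun r (_ : r ∈ univ) => h r
    simp only [sum_sub_distrib, sum_const, card_univ, nsmul_eq_mul] at htot
    have hcard : (Fintype.card ι : K) - 1 ≠ 0 :=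
      sub_ne_zero.mpr (by exact_mod_cast (by omega : Fintype.card ι ≠ 1))
    exact mul_left_cancel₀ hcard (by linear_combination htot)
  funext r
  linear_combination hsum - h r

theorem Fin.sum_ite_lt {R : Type*} [AddCommMonoidWithOne R] {k : ℕ} (c : Fin k) :
    ∑ t : Fin k, (if t < c then 1 else 0 : R) = c := by
  simp [sum_boole, Fin.card_Iio, filter_gt_eq_Iio]

theorem sum_Umat_apply (k : ℕ) (c : Fin k) : ∑ t, Umat k t c = c :=
  Fin.sum_ite_lt c

theorem Umat_add_Lmat_add_one (k : ℕ) : Umat k + Lmat k + 1 = of fun _ _ => 1 := by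
  ext t c
  rcases lt_trichotomy t c with h | rfl | h
  · simp [Umat, Lmat, one_apply, h, h.ne, h.not_gt]
  · simp [Umat, Lmat]
  · simp [Umat, Lmat, one_apply, h, h.ne', h.not_gt]

theorem Umat_add_Lmat_apply (k : ℕ) (t c : Fin k) :
    (Umat k + Lmat k) t c = if t = c then 0 else 1 := by
  have := congrFun₂ (Umat_add_Lmat_add_one k) t c
  rw [Matrix.add_apply, one_apply] at this
  split_ifs at this ⊢ <;> simpa using this

theorem sum_Umat_add_Lmat_apply (k : ℕ) (c : Fin k) : ∑ t, (Umat k + Lmat k) t c = k - 1 := by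
  simp only [Umat_add_Lmat_apply]
  rw [sum_ite, sum_const_zero, zero_add, sum_const, filter_ne', card_erase_of_mem (mem_univ _)]
  simp [Nat.cast_pred c.pos]

theorem sum_Mmat_apply (n k : ℕ) (r s : Fin n) (x : Fin k) :
    ∑ t, Mmat n k (r, t) (s, x) = (if r = s then (k : ℚ) - 1 else x) + if s < r then 1 else 0 := by
  rcases lt_trichotomy r s with h | rfl | h
  · simp [Mmat, h, h.ne, h.not_gt, sum_Umat_apply]
  · simp [Mmat, ← sum_Umat_add_Lmat_apply k x]
  · simp [Mmat, h, h.ne', h.not_gt, sum_add_distrib, sum_Umat_apply, one_apply]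

def bidVector {n k : ℕ} (i : Fin n → Fin k) : Fin n × Fin k → ℚ :=
  fun p => (Pi.single (i p.1) 1 : Fin k → ℚ) p.2

theorem ValidBid.exists_eq_bidVector {n k : ℕ} {u : Fin n × Fin k → ℚ} (hu : ValidBid n k u) :
    ∃ i, u = bidVector i := by
  choose i hi using hu
  exact ⟨i, funext fun p => hi p.1 p.2⟩

theorem mulVec_bidVector_apply {n k : ℕ} {m : Type*} (A : Matrix m (Fin n × Fin k) ℚ)
    (i : Fin n → Fin k) (p : m) : (A *ᵥ bidVector i) p = ∑ s, A p (s, i s) := by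
  simp [mulVec, dotProduct, Fintype.sum_prod_type, bidVector, Pi.single_apply]

theorem sum_Mmat_mulVec_bidVector (n k : ℕ) (i : Fin n → Fin k) (r : Fin n) :
    ∑ t, (Mmat n k *ᵥ bidVector i) (r, t) = (k - 1 + r : ℚ) + (∑ s, (i s : ℚ) - i r) := by
  simp only [mulVec_bidVector_apply]
  rw [sum_comm]
  simp only [sum_Mmat_apply, sum_add_distrib, Fin.sum_ite_lt]
  have hdiag : ∀ s, (if r = s then (k : ℚ) - 1 else i s) =
      i s + if r = s then (k - 1 - i r : ℚ) else 0 := by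
    intro s; split_ifs with h <;> simp [h]
  simp only [hdiag, sum_add_distrib, sum_ite_eq, mem_univ, if_true]
  ring

theorem eq_of_Mmat_mulVec_bidVector_eq_of_two_le {n k : ℕ} (hn : 2 ≤ n) {i j : Fin n → Fin k}
    (h : Mmat n k *ᵥ bidVector i = Mmat n k *ᵥ bidVector j) : i = j := by
  have hblock : ∀ r, ∑ s, (i s : ℚ) - i r = ∑ s, (j s : ℚ) - j r := fun r => by
    simpa [sum_Mmat_mulVec_bidVector] using congrArg (fun w => ∑ t, w (r, t)) h
  have hcast := Fintype.eq_of_forall_sum_sub_apply_eq (by simpa using hn) hblock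
  exact funext fun r => Fin.ext (by exact_mod_cast congrFun hcast r)

theorem Mmat_one_mulVec_bidVector_apply {k : ℕ} (i : Fin 1 → Fin k) (t : Fin k) :
    (Mmat 1 k *ᵥ bidVector i) (0, t) = if t = i 0 then 0 else 1 := by
  simp only [mulVec_bidVector_apply, Fin.sum_univ_one, Mmat]
  exact Umat_add_Lmat_apply k t (i 0)

theorem eq_of_Mmat_one_mulVec_bidVector_eq {k : ℕ} {i j : Fin 1 → Fin k}
    (h : Mmat 1 k *ᵥ bidVector i = Mmat 1 k *ᵥ bidVector j) : i = j := by
  funext r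
  obtain rfl := Subsingleton.elim r 0
  by_contra hne
  simpa [Mmat_one_mulVec_bidVector_apply, hne] using congrFun h (0, i 0)

theorem outcome_map_injective_general (n k : ℕ) (hn : 0 < n)
    (u v : Fin n × Fin k → ℚ)
    (hu : ValidBid n k u) (hv : ValidBid n k v)
    (h : (Mmat n k).mulVec u = (Mmat n k).mulVec v) : u = v := by
  obtain ⟨i, rfl⟩ := hu.exists_eq_bidVector
  obtain ⟨j, rfl⟩ := hv.exists_eq_bidVector
  congr 1
  obtain rfl | hn : n = 1 ∨ 2 ≤ n := by omega
  · exact eq_of_Mmat_one_mulVec_bidVector_eq h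
  · exact eq_of_Mmat_mulVec_bidVector_eq_of_two_le hn h

theorem outcome_map_injective (n k : ℕ) (hn : 0 < n) (hk : 0 < k)
    (u v : Fin n × Fin k → ℚ)
    (hu : ValidBid n k u) (hv : ValidBid n k v)
    (h : (Mmat n k).mulVec u = (Mmat n k).mulVec v) : u = v :=
  outcome_map_injective_general n k hn u v hu hv h
end

section
/- In the EQDL man-in-the-middle attack: let G be a finite cyclic group of prime order q with generators g₁ and g₂. Suppose for indices o in a finite set S, party o holds secret m_o and publishes λ_o = g₁^{z_o}, μ_o = g₂^{z_o}, and to challenge c responds r_o = z_o + c·m_o. Let v = g₁^{1 − Σ_o m_o} and w = g₂^{1 − Σ_o m_o}. Then λ = Π_o λ_o^{−1}, μ = Π_o μ_o^{−1}, and r = c − Σ_o r_o satisfy the verification equations g₁^r = λ·v^c and g₂^r = μ·w^c. -/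
/-! The attacker's response satisfies `r + Σ z_o = (1 - Σ m_o) · c` in `ZMod q`, because each
`r_o = z_o + c m_o`. Since `g ^ q = 1` for every `g ∈ G`, the map `a ↦ g ^ a.val` turns sums and
products in `ZMod q` into products and powers in `G`, so this exponent identity becomes both
verification equations at once. -/

open Finset

section ZModPow

variable {M : Type*} {n : ℕ} {g : M}

theorem pow_zmod_val_add [Monoid M] [NeZero n] (hg : g ^ n = 1) (a b : ZMod n) :
    g ^ (a + b).val = g ^ a.val * g ^ b.val := by
  rw [ZMod.val_add, ← pow_eq_pow_mod _ hg, pow_add]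

theorem pow_zmod_val_mul [Monoid M] (hg : g ^ n = 1) (a b : ZMod n) :
    g ^ (a * b).val = (g ^ a.val) ^ b.val := by
  rw [ZMod.val_mul, ← pow_eq_pow_mod _ hg, pow_mul]

theorem pow_zmod_val_sum [CommMonoid M] [NeZero n] (hg : g ^ n = 1) {ι : Type*} (s : Finset ι)
    (f : ι → ZMod n) : g ^ (∑ i ∈ s, f i).val = ∏ i ∈ s, g ^ (f i).val := by
  induction s using Finset.cons_induction with
  | empty => simp
  | cons i s hi ih => rw [sum_cons, prod_cons, pow_zmod_val_add hg, ih]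

theorem pow_zmod_val_eq_prod_inv_mul [CommGroup M] [NeZero n] (hg : g ^ n = 1) {ι : Type*}
    {s : Finset ι} {z : ι → ZMod n} {r e c : ZMod n} (h : r + ∑ i ∈ s, z i = e * c) :
    g ^ r.val = (∏ i ∈ s, (g ^ (z i).val)⁻¹) * (g ^ e.val) ^ c.val := by
  rw [← pow_zmod_val_mul hg, prod_inv_distrib, ← pow_zmod_val_sum hg, eq_inv_mul_iff_mul_eq,
    mul_comm, ← pow_zmod_val_add hg, h]

end ZModPow

theorem mitm_response_add_sum_eq {ι R : Type*} [CommRing R] (s : Finset ι) (z m resp : ι → R)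
    (c : R) (hresp : ∀ i, resp i = z i + c * m i) :
    (c - ∑ i ∈ s, resp i) + ∑ i ∈ s, z i = (1 - ∑ i ∈ s, m i) * c := by
  simp only [hresp, sum_add_distrib, ← mul_sum]
  ring

theorem mitm_eqdl_verifies_general (G : Type*) [CommGroup G] [Fintype G] (q : ℕ)
    (hcard : Fintype.card G = q) (g₁ g₂ : G)
    (ι : Type*) (S : Finset ι) (z m : ι → ZMod q) (c : ZMod q)
    (lam mu : ι → G)
    (hlam : ∀ o, lam o = g₁ ^ (z o).val) (hmu : ∀ o, mu o = g₂ ^ (z o).val)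
    (resp : ι → ZMod q) (hresp : ∀ o, resp o = z o + c * m o)
    (v w : G)
    (hv : v = g₁ ^ (1 - ∑ o ∈ S, m o).val) (hw : w = g₂ ^ (1 - ∑ o ∈ S, m o).val)
    (lamM muM : G)
    (hlamM : lamM = ∏ o ∈ S, (lam o)⁻¹) (hmuM : muM = ∏ o ∈ S, (mu o)⁻¹)
    (r : ZMod q) (hr : r = c - ∑ o ∈ S, resp o) :
    g₁ ^ r.val = lamM * v ^ c.val ∧ g₂ ^ r.val = muM * w ^ c.val := by
  subst hcard hr hv hw hlamM hmuM
  have hexp := mitm_response_add_sum_eq S z m resp c hresp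
  simp only [hlam, hmu]
  exact ⟨pow_zmod_val_eq_prod_inv_mul pow_card_eq_one hexp,
    pow_zmod_val_eq_prod_inv_mul pow_card_eq_one hexp⟩

theorem mitm_eqdl_verifies (G : Type*) [CommGroup G] [Fintype G] (q : ℕ) (hq : q.Prime)
    (hcard : Fintype.card G = q) (g₁ g₂ : G)
    (ι : Type*) (S : Finset ι) (z m : ι → ZMod q) (c : ZMod q)
    (lam mu : ι → G)
    (hlam : ∀ o, lam o = g₁ ^ (z o).val) (hmu : ∀ o, mu o = g₂ ^ (z o).val)
    (resp : ι → ZMod q) (hresp : ∀ o, resp o = z o + c * m o)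
    (v w : G)
    (hv : v = g₁ ^ (1 - ∑ o ∈ S, m o).val) (hw : w = g₂ ^ (1 - ∑ o ∈ S, m o).val)
    (lamM muM : G)
    (hlamM : lamM = ∏ o ∈ S, (lam o)⁻¹) (hmuM : muM = ∏ o ∈ S, (mu o)⁻¹)
    (r : ZMod q) (hr : r = c - ∑ o ∈ S, resp o) :
    g₁ ^ r.val = lamM * v ^ c.val ∧ g₂ ^ r.val = muM * w ^ c.val :=
  mitm_eqdl_verifies_general G q hcard g₁ g₂ ι S z m c lam mu hlam hmu resp hresp v w hv hw lamM muM
    hlamM hmuM r hr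
end
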